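/- arXiv:math/0511151 — 2 statements merged into one kernel-verified Lean document; each statement's English description precedes it below -/
import Mathlib

section
/- Let K ⊆ ℝⁿ be a measurable set with finite measure and let p be a positive integer. Then Per(χ_K)(ξ) ≤ p for a.e. ξ ∈ ℝⁿ if and only if there exists a measurable partition K₁, …, K_p of K such that for every i ∈ {1, …, p} and every k ∈ ℤⁿ \ {0} the set K_i ∩ (K_i + 2kπ) is null. -/
open MeasureTheory Complex Filter Topology Matrix
open scoped ENNReal ComplexConjugate

noncomputable section

abbrev Rn (n : ℕ) := Fin n → ℝ
abbrev Zn (n : ℕ) := Fin n → ℤ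
abbrev L2 (n : ℕ) := Lp ℂ 2 (volume : Measure (Rn n))
abbrev l2Z (n : ℕ) := lp (fun _ : Zn n => ℂ) 2

/-- The vector `2sπ` for `s ∈ ℤⁿ`. -/
def twoPi {n : ℕ} (s : Zn n) : Rn n := fun i => 2 * Real.pi * (s i : ℝ)

open Classical in
/-- The element of `L²(ℝⁿ)` determined by a square-integrable function (junk value `0` otherwise). -/
def toL2 {n : ℕ} (f : Rn n → ℂ) : L2 n := if h : MemLp f 2 volume then h.toLp f else 0

open Classical in
/-- The element of `ℓ²(ℤⁿ)` determined by a square-summable sequence (junk value `0` otherwise). -/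
def tol2 {n : ℕ} (a : Zn n → ℂ) : l2Z n := if h : Memℓp a 2 then ⟨a, h⟩ else 0

/-- Translation: `(T_k f)(x) = f (x - k)`. -/
def Tk {n : ℕ} (k : Zn n) (f : Rn n → ℂ) : Rn n → ℂ := fun x => f (x - fun i => (k i : ℝ))

/-- The real matrix associated with an integer matrix. -/
def matR {n : ℕ} (A : Matrix (Fin n) (Fin n) ℤ) : Matrix (Fin n) (Fin n) ℝ :=
  A.map (Int.cast : ℤ → ℝ)

/-- Dilation: `(D_B f)(x) = |det B|^{1/2} f (Bx)`. -/
def DA {n : ℕ} (B : Matrix (Fin n) (Fin n) ℝ) (f : Rn n → ℂ) : Rn n → ℂ :=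
  fun x => (Real.sqrt |B.det| : ℂ) * f (B.mulVec x)

/-- A dilation matrix: integer entries, all (complex) eigenvalues of modulus `> 1`. -/
def IsDilationMatrix {n : ℕ} (A : Matrix (Fin n) (Fin n) ℤ) : Prop :=
  (matR A).det ≠ 0 ∧
    ∀ z : ℂ, (Matrix.charpoly (A.map (Int.cast : ℤ → ℂ))).IsRoot z → 1 < ‖z‖

/-- The Fourier integral `f̂(ξ) = ∫ f(x) e^{-i⟨x,ξ⟩} dx` (defined for integrable `f`). -/
def ftIntegral {n : ℕ} (f : Rn n → ℂ) (ξ : Rn n) : ℂ :=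
  ∫ x : Rn n, f x * Complex.exp (-Complex.I * (∑ i, x i * ξ i : ℝ))

/-- `g` is (a pointwise representative of) the `L²`-Fourier transform of `f`, characterized by
Parseval's relation `⟨g, ĥ⟩ = (2π)^n ⟨f, h⟩` against all test functions `h ∈ L¹ ∩ L²`. -/
def HasFT {n : ℕ} (f g : Rn n → ℂ) : Prop :=
  MemLp f 2 volume ∧ MemLp g 2 volume ∧
    ∀ h : Rn n → ℂ, Integrable h volume → MemLp h 2 volume →
      ∫ ξ : Rn n, g ξ * conj (ftIntegral h ξ) =
        (((2 * Real.pi) ^ n : ℝ) : ℂ) * ∫ x : Rn n, f x * conj (h x)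

/-- `(e_i)` is a normalized tight frame for the closed subspace `V`. -/
def IsNTF {ι H : Type*} [NormedAddCommGroup H] [InnerProductSpace ℂ H]
    (V : Submodule ℂ H) (e : ι → H) : Prop :=
  (∀ i, e i ∈ V) ∧ ∀ f ∈ V, ∑' i, ‖(inner ℂ f (e i) : ℂ)‖ ^ 2 = ‖f‖ ^ 2

/-- `Φ` is a NTF generator for `V`: the translates `T_k φ` form a NTF for `V`. -/
def IsNTFGen {n : ℕ} {ι : Type*} (V : Submodule ℂ (L2 n)) (φ : ι → Rn n → ℂ) : Prop :=
  IsNTF V fun p : Zn n × ι => toL2 (Tk p.1 (φ p.2))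

/-- A generalized multiresolution analysis for the dilation matrix `A`. -/
structure GMRA (n : ℕ) (A : Matrix (Fin n) (Fin n) ℤ) where
  V : ℤ → Submodule ℂ (L2 n)
  closed : ∀ j, IsClosed (V j : Set (L2 n))
  mono : ∀ j, V j ≤ V (j + 1)
  dilate : ∀ (j : ℤ) (f : Rn n → ℂ), MemLp f 2 volume →
    (toL2 f ∈ V j ↔ toL2 (DA (matR A) f) ∈ V (j + 1))
  dense_union : Dense (⋃ j : ℤ, (V j : Set (L2 n)))
  inter_bot : (⨅ j : ℤ, V j) = ⊥
  shift_inv : ∀ (k : Zn n) (f : L2 n), f ∈ V 0 ↔ toL2 (Tk k (f : Rn n → ℂ)) ∈ V 0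

/-- A closed subspace of `L²(ℝⁿ)` is shift invariant if it is invariant under all
integer translations. -/
def IsShiftInvariant {n : ℕ} (V : Submodule ℂ (L2 n)) : Prop :=
  ∀ (k : Zn n) (f : L2 n), f ∈ V ↔ toL2 (Tk k (f : Rn n → ℂ)) ∈ V

/-- The shift `λ(k)` on sequences: `(λ(k)α)(l) = α(l - k)`. -/
def shiftSeq {n : ℕ} (k : Zn n) (a : Zn n → ℂ) : Zn n → ℂ := fun l => a (l - k)

/-- A measurable periodic range function, given by its (orthogonal-projection) values. -/
structure PRF (n : ℕ) where
  P : Rn n → l2Z n →L[ℂ] l2Z n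
  idem : ∀ ξ, (P ξ).comp (P ξ) = P ξ
  selfadj : ∀ (ξ : Rn n) (a b : l2Z n), (inner ℂ (P ξ a) b : ℂ) = inner ℂ a (P ξ b)
  meas : ∀ a b : l2Z n, Measurable fun ξ => (inner ℂ (P ξ a) b : ℂ)
  periodic : ∀ (k : Zn n) (ξ : Rn n) (a : l2Z n),
    P (ξ + twoPi k) a = tol2 (shiftSeq (-k) ((P ξ (tol2 (shiftSeq k (a : Zn n → ℂ)))) : Zn n → ℂ))

/-- The fiberization map `𝒯f(ξ) = (f̂(ξ+2kπ))_k ∈ ℓ²(ℤⁿ)`, applied to the Fourier transform `g`. -/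
def Tper {n : ℕ} (g : Rn n → ℂ) (ξ : Rn n) : l2Z n := tol2 fun k => g (ξ + twoPi k)

/-- `J` is the periodic range function of the shift invariant space `V`:
`V = {f : 𝒯f(ξ) ∈ J(ξ) for a.e. ξ}`. -/
def IsRangeFunctionOf {n : ℕ} (J : PRF n) (V : Submodule ℂ (L2 n)) : Prop :=
  ∀ f g : Rn n → ℂ, HasFT f g →
    (toL2 f ∈ V ↔ ∀ᵐ ξ : Rn n, J.P ξ (Tper g ξ) = Tper g ξ)

/-- The periodization `Per(g)(ξ) = ∑_{k∈ℤⁿ} g(ξ + 2kπ)`. -/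
def Per {n : ℕ} (g : Rn n → ℝ) (ξ : Rn n) : ℝ := ∑' k : Zn n, g (ξ + twoPi k)

/-- The affine system `{D_A^j T_k ψ}` indexed by `(j,k,i)` is a normalized tight frame for
`L²(ℝⁿ)`, i.e. `Ψ` is a NTF multiwavelet. -/
def IsNTFMultiwavelet {n : ℕ} {ι : Type*} (A : Matrix (Fin n) (Fin n) ℤ)
    (ψ : ι → Rn n → ℂ) : Prop :=
  ∀ f : L2 n,
    ∑' q : ℤ × Zn n × ι,
        ‖(inner ℂ f (toL2 (DA ((matR A) ^ q.1) (Tk q.2.1 (ψ q.2.2)))) : ℂ)‖ ^ 2 = ‖f‖ ^ 2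

end

/-!
`Per(χ_K)(ξ)` is the number of lattice translates `ξ + 2πk` lying in `K`. Integrating this count
over a fundamental domain of `2πℤⁿ` gives `|K| < ∞`, so it is finite almost everywhere, and the
condition `Per(χ_K) ≤ p` says that a.e. point has at most `p` translates in `K`.

If `K = K₁ ∪ ⋯ ∪ K_p` with `K_i ∩ (K_i + 2πk)` null for `k ≠ 0`, then a.e. each `K_i` contains at
most one translate of `ξ`, giving at most `p` in total. Conversely, order `ℤⁿ` lexicographically
and put `x ∈ K` into the piece indexed by the number of its translates in `K` that lie below it
(capped at `p - 1`). Since the order is translation invariant, two points of `K` differing by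
`2πk ≠ 0` are translates of a common point with distinct ranks, and these ranks stay below `p`.
-/

open Set
open scoped Pointwise

section Rank

variable {α : Type*} [LinearOrder α]

noncomputable def rankIn (s : Set α) (a : α) : ℕ := {m ∈ s | m < a}.ncard

lemma rankIn_lt_ncard {s : Set α} (hs : s.Finite) {a : α} (ha : a ∈ s) : rankIn s a < s.ncard :=
  ncard_lt_ncard ⟨sep_subset _ _, fun h => lt_irrefl a (h ha).2⟩ hs

lemma strictMonoOn_rankIn {s : Set α} (hs : s.Finite) : StrictMonoOn (rankIn s) s :=
  fun a ha _ _ hab => ncard_lt_ncard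
    ⟨fun _ hm => ⟨hm.1, hm.2.trans hab⟩, fun h => lt_irrefl a (h ⟨ha, hab⟩).2⟩
    (hs.subset (sep_subset _ _))

lemma rankIn_preimage_add_left {G : Type*} [AddCommGroup G] [LinearOrder G] [IsOrderedAddMonoid G]
    (s : Set G) (k a : G) : rankIn ((k + ·) ⁻¹' s) a = rankIn s (k + a) := by
  have : {m ∈ (k + ·) ⁻¹' s | m < a} = (k + ·) ⁻¹' {m ∈ s | m < k + a} := by
    ext m; simp
  rw [rankIn, this, ncard_preimage_of_injective_subset_range (add_right_injective k)
    (fun y _ => ⟨-k + y, add_neg_cancel_left k y⟩), rankIn]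

end Rank

lemma tsum_indicator_one_eq_encard {α ι : Type*} (s : ι → Set α) (x : α) :
    ∑' i, (s i).indicator (1 : α → ℝ≥0∞) x = {i | x ∈ s i}.encard := by
  rw [← ENNReal.tsum_set_one, tsum_subtype {i | x ∈ s i} fun _ => (1 : ℝ≥0∞)]
  congr 1

lemma measurable_encard_setOf_mem {α ι : Type*} [MeasurableSpace α] [Countable ι]
    {s : ι → Set α} (hs : ∀ i, MeasurableSet (s i)) :
    Measurable fun x => {i | x ∈ s i}.encard := by
  have hF : Measurable fun x => ({i | x ∈ s i}.encard : ℝ≥0∞) := by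
    simp_rw [← tsum_indicator_one_eq_encard]
    exact Measurable.tsum fun i => measurable_one.indicator (hs i)
  intro t _
  have : (fun x => {i | x ∈ s i}.encard) ⁻¹' t
      = (fun x => ({i | x ∈ s i}.encard : ℝ≥0∞)) ⁻¹' (ENat.toENNReal '' t) := by
    ext x; simp
  rw [this]
  exact hF (t.to_countable.image _).measurableSet

-- The counting function is integrable over `s` with integral `μ K`, hence finite a.e. on `s`;
-- its infinity set is `G`-invariant, so it is null.
theorem MeasureTheory.IsAddFundamentalDomain.ae_finite_setOf_vadd_mem {G α : Type*} [AddGroup G]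
    [Countable G] [MeasurableSpace α] [AddAction G α] [MeasurableConstVAdd G α] {μ : Measure α}
    [VAddInvariantMeasure G α μ] {s : Set α} (hs : IsAddFundamentalDomain G s μ) {K : Set α}
    (hK : MeasurableSet K) (hμK : μ K ≠ ∞) :
    ∀ᵐ x ∂μ, {g : G | g +ᵥ x ∈ K}.Finite := by
  set F : α → ℝ≥0∞ := fun x => ({g : G | g +ᵥ x ∈ K}.encard : ℝ≥0∞)
  have hF : Measurable F := measurable_from_top.comp
    (measurable_encard_setOf_mem fun g => measurable_const_vadd g hK)
  have hFs : ∫⁻ x in s, F x ∂μ = μ K := calc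
    ∫⁻ x in s, F x ∂μ = ∫⁻ x in s, ∑' g : G, K.indicator 1 (g +ᵥ x) ∂μ :=
        lintegral_congr fun x =>
          (tsum_indicator_one_eq_encard (fun g : G => (g +ᵥ ·) ⁻¹' K) x).symm
    _ = ∑' g : G, ∫⁻ x in s, K.indicator 1 (g +ᵥ x) ∂μ :=
        lintegral_tsum fun g => ((measurable_one.indicator hK).comp
          (measurable_const_vadd g)).aemeasurable
    _ = μ K := by rw [← hs.lintegral_eq_tsum'', lintegral_indicator_one hK]
  have hW : MeasurableSet {x | F x = ∞} := hF (measurableSet_singleton ∞)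
  have hWs : μ ({x | F x = ∞} ∩ s) = 0 := by
    rw [← Measure.restrict_apply hW, measure_eq_zero_iff_ae_notMem]
    filter_upwards [ae_lt_top hF (hFs ▸ hμK)] with x hx using hx.ne
  have hF_vadd : ∀ (h : G) x, F (h +ᵥ x) = F x := by
    intro h x
    have : {g : G | g +ᵥ (h +ᵥ x) ∈ K} = (· + h) ⁻¹' {g : G | g +ᵥ x ∈ K} := by
      ext g; simp [add_vadd]
    simp only [F, this, encard_preimage_of_injective_subset_range (add_left_injective h)
      (fun g _ => ⟨g - h, sub_add_cancel g h⟩)]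
  have hinv : ∀ h : G, h +ᵥ {x | F x = ∞} = {x | F x = ∞} := fun h => by
    ext x; simp only [mem_vadd_set_iff_neg_vadd_mem, mem_ofPred_eq, hF_vadd]
  filter_upwards [measure_eq_zero_iff_ae_notMem.1 (hs.measure_zero_of_invariant _ hinv hWs)]
    with x hx
  simpa [F, encard_eq_top_iff] using hx

variable {n : ℕ}

lemma twoPi_add (a b : Zn n) : twoPi (a + b) = twoPi a + twoPi b := by
  ext i; simp only [twoPi, Pi.add_apply, Int.cast_add]; ring

lemma twoPi_zero : twoPi (0 : Zn n) = 0 := by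
  ext i; simp [twoPi]

lemma twoPi_sub (a b : Zn n) : twoPi (a - b) = twoPi a - twoPi b := by
  ext i; simp only [twoPi, Pi.sub_apply, Int.cast_sub]; ring

lemma twoPi_injective : Function.Injective (twoPi (n := n)) := by
  intro a b h
  ext i
  simpa [twoPi, Real.pi_ne_zero] using congrFun h i

noncomputable def twoPiBasis (n : ℕ) : Module.Basis (Fin n) ℝ (Rn n) :=
  (Pi.basisFun ℝ (Fin n)).isUnitSMul fun _ =>
    (isUnit_iff_ne_zero.2 Real.two_pi_pos.ne' : IsUnit (2 * Real.pi))

lemma twoPi_mem_span (k : Zn n) : twoPi k ∈ Submodule.span ℤ (range (twoPiBasis n)) := by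
  refine (Submodule.mem_span_range_iff_exists_fun ℤ).2 ⟨k, ?_⟩
  ext j
  simp [twoPiBasis, Module.Basis.isUnitSMul_apply, twoPi, Finset.sum_apply, Pi.single_apply,
    mul_comm]

def translatesIn (K : Set (Rn n)) (x : Rn n) : Set (Zn n) := {k | x + twoPi k ∈ K}

lemma per_indicator_eq_ncard (K : Set (Rn n)) (x : Rn n) :
    Per (K.indicator fun _ => (1 : ℝ)) x = (translatesIn K x).ncard := calc
  Per (K.indicator fun _ => (1 : ℝ)) x = ∑' k, (translatesIn K x).indicator 1 k := rfl
  _ = ∑' _ : translatesIn K x, (1 : ℝ) := (tsum_subtype _ _).symm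
  _ = (translatesIn K x).ncard := by rw [tsum_const, nsmul_one, Nat.card_coe_set_eq]

lemma translatesIn_add_twoPi (K : Set (Rn n)) (x : Rn n) (k : Zn n) :
    translatesIn K (x + twoPi k) = (k + ·) ⁻¹' translatesIn K x := by
  ext m; simp [translatesIn, add_assoc, twoPi_add]

lemma ae_finite_translatesIn {K : Set (Rn n)} (hK : MeasurableSet K) (hKfin : volume K ≠ ∞) :
    ∀ᵐ x, (translatesIn K x).Finite := by
  let L := (Submodule.span ℤ (range (twoPiBasis n))).toAddSubgroup
  have : Countable L := inferInstanceAs (Countable (Submodule.span ℤ (range (twoPiBasis n))))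
  let e : Zn n → L := fun k => ⟨twoPi k, twoPi_mem_span k⟩
  have he : Function.Injective e := fun a b h => twoPi_injective (congrArg Subtype.val h)
  filter_upwards [(ZSpan.isAddFundamentalDomain' (twoPiBasis n) volume).ae_finite_setOf_vadd_mem
    hK hKfin] with x hx
  refine (hx.preimage he.injOn).subset fun k hk => ?_
  show twoPi k + x ∈ K
  rwa [add_comm]

lemma ae_per_le_iff_ae_encard_le {K : Set (Rn n)} (hK : MeasurableSet K) (hKfin : volume K ≠ ∞)
    (p : ℕ) :
    (∀ᵐ ξ, Per (K.indicator fun _ => (1 : ℝ)) ξ ≤ p) ↔ ∀ᵐ ξ, (translatesIn K ξ).encard ≤ p := by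
  simp only [per_indicator_eq_ncard, encard_le_coe_iff_finite_ncard_le, Nat.cast_le]
  refine ⟨fun h => ?_, fun h => h.mono fun _ hξ => hξ.2⟩
  filter_upwards [h, ae_finite_translatesIn hK hKfin] with ξ hle hfin using ⟨hfin, hle⟩

lemma ae_subsingleton_translatesIn {A : Set (Rn n)}
    (hA : ∀ k : Zn n, k ≠ 0 → volume (A ∩ {x | x - twoPi k ∈ A}) = 0) :
    ∀ᵐ x, (translatesIn A x).Subsingleton := by
  have h : ∀ a b : Zn n, ∀ᵐ x, a ∈ translatesIn A x → b ∈ translatesIn A x → a = b := by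
    intro a b
    by_cases hab : a = b
    · exact ae_of_all _ fun _ _ _ => hab
    have hnull := measure_eq_zero_iff_ae_notMem.1 (hA (b - a) (sub_ne_zero.2 (Ne.symm hab)))
    filter_upwards [(measurePreserving_add_right volume (twoPi b)).quasiMeasurePreserving.ae hnull]
      with x hx ha hb
    have hba : x + twoPi b - twoPi (b - a) = x + twoPi a := by rw [twoPi_sub]; abel
    exact (hx ⟨hb, by rwa [mem_ofPred_eq, hba]⟩).elim
  filter_upwards [ae_all_iff.2 fun a => ae_all_iff.2 (h a)] with x hx a ha b hb
  exact hx a b ha hb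

lemma encard_translatesIn_le_of_iUnion_eq {p : ℕ} {Ki : Fin p → Set (Rn n)} {K : Set (Rn n)}
    (hKi : ⋃ i, Ki i = K) {x : Rn n} (hx : ∀ i, (translatesIn (Ki i) x).Subsingleton) :
    (translatesIn K x).encard ≤ p := by
  have hcover : translatesIn K x = ⋃ i, translatesIn (Ki i) x := by
    ext k; simp [translatesIn, ← hKi]
  calc (translatesIn K x).encard ≤ ∑ i, (translatesIn (Ki i) x).encard :=
        hcover ▸ encard_iUnion_le_of_fintype _
    _ ≤ ∑ _ : Fin p, 1 := Finset.sum_le_sum fun i _ => encard_le_one_iff_subsingleton.2 (hx i)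
    _ = p := by simp

noncomputable def lexRank (K : Set (Rn n)) (x : Rn n) : ℕ :=
  rankIn (ofLex ⁻¹' translatesIn K x) 0

lemma measurable_lexRank {K : Set (Rn n)} (hK : MeasurableSet K) : Measurable (lexRank K) := by
  have h := measurable_encard_setOf_mem
    (s := fun k : Zn n => {x | x + twoPi k ∈ K ∧ toLex k < 0})
    fun k => (measurable_add_const (twoPi k) hK).inter (MeasurableSet.const _)
  change Measurable fun x => {k : Zn n | x + twoPi k ∈ K ∧ toLex k < 0}.encard.toNat
  exact measurable_from_top.comp h

lemma lexRank_add_twoPi (K : Set (Rn n)) (x : Rn n) (k : Zn n) :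
    lexRank K (x + twoPi k) = rankIn (ofLex ⁻¹' translatesIn K x) (toLex k) := by
  rw [lexRank, translatesIn_add_twoPi]
  exact (rankIn_preimage_add_left (ofLex ⁻¹' translatesIn K x) (toLex k) 0).trans
    (by rw [add_zero])

def rankPiece (K : Set (Rn n)) (p i : ℕ) : Set (Rn n) := K ∩ {x | min (lexRank K x) (p - 1) = i}

lemma measurableSet_rankPiece {K : Set (Rn n)} (hK : MeasurableSet K) (p i : ℕ) :
    MeasurableSet (rankPiece K p i) :=
  hK.inter ((measurable_lexRank hK).min measurable_const (measurableSet_singleton i))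

lemma pairwise_disjoint_rankPiece (K : Set (Rn n)) (p : ℕ) :
    Pairwise fun i j : Fin p => Disjoint (rankPiece K p i) (rankPiece K p j) :=
  fun _ _ hij => disjoint_left.2 fun _ hi hj => hij (Fin.ext (hi.2.symm.trans hj.2))

lemma iUnion_rankPiece (K : Set (Rn n)) {p : ℕ} (hp : 0 < p) :
    ⋃ i : Fin p, rankPiece K p i = K := by
  refine Subset.antisymm (iUnion_subset fun _ => inter_subset_left) fun x hx => ?_
  exact mem_iUnion.2 ⟨⟨min (lexRank K x) (p - 1), by omega⟩, hx, rfl⟩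

lemma eq_zero_of_mem_rankPiece {K : Set (Rn n)} {p i : ℕ} {x : Rn n} {k : Zn n}
    (hx : (translatesIn K x).encard ≤ p) (h₀ : x ∈ rankPiece K p i)
    (hk : x + twoPi k ∈ rankPiece K p i) : k = 0 := by
  set S : Set (Lex (Zn n)) := ofLex ⁻¹' translatesIn K x
  obtain ⟨hfin, hcard⟩ := encard_le_coe_iff_finite_ncard_le.1 hx
  have hSfin : S.Finite := hfin.preimage ofLex.injective.injOn
  have hSp : S.ncard ≤ p :=
    (ncard_preimage_of_injective_subset_range ofLex.injective (by simp)).trans_le hcard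
  have hrank : ∀ a ∈ S, min (rankIn S a) (p - 1) = rankIn S a := fun a ha =>
    min_eq_left (by have := rankIn_lt_ncard hSfin ha; omega)
  have h₀S : toLex 0 ∈ S := by simpa [S, translatesIn, twoPi_zero] using h₀.1
  have hkS : toLex k ∈ S := hk.1
  have hrk : rankIn S (toLex k) = rankIn S (toLex 0) := by
    rw [← hrank _ hkS, ← hrank _ h₀S, ← lexRank_add_twoPi]
    exact hk.2.trans h₀.2.symm
  exact toLex.injective ((strictMonoOn_rankIn hSfin).injOn hkS h₀S hrk)

lemma volume_rankPiece_inter_eq_zero {K : Set (Rn n)} {p : ℕ}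
    (h : ∀ᵐ x, (translatesIn K x).encard ≤ p) (i : ℕ) {k : Zn n} (hk : k ≠ 0) :
    volume (rankPiece K p i ∩ {x | x - twoPi k ∈ rankPiece K p i}) = 0 := by
  rw [measure_eq_zero_iff_ae_notMem]
  filter_upwards [(measurePreserving_sub_right volume (twoPi k)).quasiMeasurePreserving.ae h]
    with x hx hmem
  exact hk (eq_zero_of_mem_rankPiece hx hmem.2 (by rw [sub_add_cancel]; exact hmem.1))

theorem periodization_le_iff_partition_general
    {n : ℕ} (K : Set (Rn n)) (hKm : MeasurableSet K)
    (hKfin : volume K < ⊤) (p : ℕ) (hp : 0 < p) :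
    (∀ᵐ ξ : Rn n, Per (K.indicator fun _ => (1 : ℝ)) ξ ≤ p) ↔
      ∃ Ki : Fin p → Set (Rn n),
        (∀ i, MeasurableSet (Ki i)) ∧
        (Pairwise fun i j => Disjoint (Ki i) (Ki j)) ∧
        (⋃ i, Ki i) = K ∧
        ∀ i, ∀ k : Zn n, k ≠ 0 → volume (Ki i ∩ {x | x - twoPi k ∈ Ki i}) = 0 := by
  rw [ae_per_le_iff_ae_encard_le hKm hKfin.ne]
  constructor
  · exact fun h => ⟨fun i => rankPiece K p i, fun i => measurableSet_rankPiece hKm p i,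
      pairwise_disjoint_rankPiece K p, iUnion_rankPiece K hp,
      fun i _ hk => volume_rankPiece_inter_eq_zero h i hk⟩
  · rintro ⟨Ki, -, -, hKi, hnull⟩
    filter_upwards [ae_all_iff.2 fun i => ae_subsingleton_translatesIn (hnull i)] with x hx
    exact encard_translatesIn_le_of_iUnion_eq hKi hx

/-- A set `K` of finite measure satisfies `Per(χ_K) ≤ p` a.e. iff it admits a measurable
partition `K₁,…,K_p` no piece of which meets any of its nontrivial `2πℤⁿ`-translates in a set
of positive measure. -/
theorem periodization_le_iff_partition
    {n : ℕ} (hn : 0 < n) (K : Set (Rn n)) (hKm : MeasurableSet K)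
    (hKfin : volume K < ⊤) (p : ℕ) (hp : 0 < p) :
    (∀ᵐ ξ : Rn n, Per (K.indicator fun _ => (1 : ℝ)) ξ ≤ p) ↔
      ∃ Ki : Fin p → Set (Rn n),
        (∀ i, MeasurableSet (Ki i)) ∧
        (Pairwise fun i j => Disjoint (Ki i) (Ki j)) ∧
        (⋃ i, Ki i) = K ∧
        ∀ i, ∀ k : Zn n, k ≠ 0 → volume (Ki i ∩ {x | x - twoPi k ∈ Ki i}) = 0 :=
  periodization_le_iff_partition_general K hKm hKfin p hp
end

section
/- Let Φ be a countable and Ψ a finite subset of L²(ℝⁿ). Suppose: ∑_{φ∈Φ} |φ̂(ξ)|² < ∞ for a.e. ξ; for every s ∈ A*ℤⁿ and a.e. ξ, ∑_{φ∈Φ} φ̂((A*)⁻¹ξ) conj(φ̂((A*)⁻¹(ξ+2sπ))) − ∑_{φ∈Φ} φ̂(ξ) conj(φ̂(ξ+2sπ)) = ∑_{ψ∈Ψ} ψ̂(ξ) conj(ψ̂(ξ+2sπ)); and lim_{J→∞} ∑_{φ∈Φ} |φ̂((A*)^J ξ)|² = 0 for a.e. ξ. Then for every s ∈ ℤⁿ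 and a.e. ξ ∈ ℝⁿ, the series ∑_{j=1}^∞ ∑_{ψ∈Ψ} ψ̂((A*)^j ξ) conj(ψ̂((A*)^j(ξ+2sπ))) converges (as the limit of the partial sums over j ∈ {1,…,J}) to ∑_{φ∈Φ} φ̂(ξ) conj(φ̂(ξ+2sπ)). -/
open MeasureTheory Complex Filter Topology Matrix
open scoped ENNReal ComplexConjugate

/-!
Put `B = A*` and `G(ξ, η) = ∑_φ φ̂(ξ) conj φ̂(η)`. Pulling the hypothesis back along `ξ ↦ Bʲ⁺¹ξ`
(null sets are preserved since `det B ≠ 0`, and `2sπ` goes to `2(A*)ʲ⁺¹sπ ∈ 2A*ℤⁿπ`) shows that the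
`j`-th term of the series is `G(Bʲξ, Bʲ(ξ+2sπ)) − G(Bʲ⁺¹ξ, Bʲ⁺¹(ξ+2sπ))`. The partial sums thus
telescope to `G(ξ, ξ+2sπ) − G(Bᴶξ, Bᴶ(ξ+2sπ))`, and `|G(Bᴶξ, Bᴶ(ξ+2sπ))|` is at most
`∑_φ |φ̂(Bᴶξ)|² + ∑_φ |φ̂(Bᴶ(ξ+2sπ))|²`, which tends to `0` by the decay hypothesis.
-/

theorem Matrix.quasiMeasurePreserving_mulVec {ι : Type*} [Fintype ι] [DecidableEq ι]
    {M : Matrix ι ι ℝ} (hM : M.det ≠ 0) :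
    Measure.QuasiMeasurePreserving (M *ᵥ ·) (volume : Measure (ι → ℝ)) volume :=
  Measure.LinearMap.quasiMeasurePreserving volume (toLin' M) (by rwa [LinearMap.det_toLin'])

theorem matR_pow {n : ℕ} (M : Matrix (Fin n) (Fin n) ℤ) (k : ℕ) : matR (M ^ k) = matR M ^ k :=
  Matrix.map_pow M (Int.castRingHom ℝ) k

theorem matR_transpose {n : ℕ} (M : Matrix (Fin n) (Fin n) ℤ) : matR Mᵀ = (matR M)ᵀ :=
  Matrix.transpose_map

theorem twoPi_mulVec {n : ℕ} (M : Matrix (Fin n) (Fin n) ℤ) (s : Zn n) :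
    twoPi (M *ᵥ s) = matR M *ᵥ twoPi s := by
  funext i
  simp only [twoPi, matR, mulVec, dotProduct, map_apply, Int.cast_sum, Int.cast_mul, Finset.mul_sum]
  exact Finset.sum_congr rfl fun j _ => by ring

theorem norm_tsum_mul_conj_le {ι 𝕜 : Type*} [RCLike 𝕜] {a b : ι → 𝕜}
    (ha : Summable fun i => ‖a i‖ ^ 2) (hb : Summable fun i => ‖b i‖ ^ 2) :
    ‖∑' i, a i * conj (b i)‖ ≤ ∑' i, ‖a i‖ ^ 2 + ∑' i, ‖b i‖ ^ 2 := by
  have hterm : ∀ i, ‖a i * conj (b i)‖ ≤ ‖a i‖ ^ 2 + ‖b i‖ ^ 2 := fun i => by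
    rw [norm_mul, RCLike.norm_conj]
    nlinarith [sq_nonneg (‖a i‖ - ‖b i‖), norm_nonneg (a i), norm_nonneg (b i)]
  have hsum := (ha.add hb).of_nonneg_of_le (fun _ => norm_nonneg _) hterm
  calc ‖∑' i, a i * conj (b i)‖ ≤ ∑' i, ‖a i * conj (b i)‖ := norm_tsum_le_tsum_norm hsum
    _ ≤ ∑' i, (‖a i‖ ^ 2 + ‖b i‖ ^ 2) := hsum.tsum_le_tsum hterm (ha.add hb)
    _ = ∑' i, ‖a i‖ ^ 2 + ∑' i, ‖b i‖ ^ 2 := ha.tsum_add hb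

theorem tendsto_tsum_mul_conj_zero {α ι 𝕜 : Type*} [RCLike 𝕜] {l : Filter α} {a b : α → ι → 𝕜}
    (ha : ∀ J, Summable fun i => ‖a J i‖ ^ 2) (hb : ∀ J, Summable fun i => ‖b J i‖ ^ 2)
    (ha₀ : Tendsto (fun J => ∑' i, ‖a J i‖ ^ 2) l (𝓝 0))
    (hb₀ : Tendsto (fun J => ∑' i, ‖b J i‖ ^ 2) l (𝓝 0)) :
    Tendsto (fun J => ∑' i, a J i * conj (b J i)) l (𝓝 0) :=
  squeeze_zero_norm (fun J => norm_tsum_mul_conj_le (ha J) (hb J)) (by simpa using ha₀.add hb₀)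

theorem tendsto_sum_range_of_sub_succ {E : Type*} [AddCommGroup E] [TopologicalSpace E]
    [IsTopologicalAddGroup E] {F g : ℕ → E} (hF : Tendsto F atTop (𝓝 0))
    (hg : ∀ j, F j - F (j + 1) = g j) :
    Tendsto (fun J => ∑ j ∈ Finset.range J, g j) atTop (𝓝 (F 0)) := by
  have hlim : Tendsto (fun J => F 0 - F J) atTop (𝓝 (F 0)) := by
    simpa using tendsto_const_nhds.sub hF
  refine hlim.congr fun J => ?_
  rw [← Finset.sum_range_sub' F J]
  exact Finset.sum_congr rfl fun j _ => hg j

theorem ae_forall_pow_sub_pow_succ {n : ℕ} {E : Type*} [Sub E] {B : Matrix (Fin n) (Fin n) ℝ}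
    (hB : B.det ≠ 0) {G H : Rn n → Rn n → E} (v : Rn n)
    (h : ∀ j : ℕ, ∀ᵐ ξ : Rn n, G (B⁻¹ *ᵥ ξ) (B⁻¹ *ᵥ (ξ + B ^ (j + 1) *ᵥ v)) -
      G ξ (ξ + B ^ (j + 1) *ᵥ v) = H ξ (ξ + B ^ (j + 1) *ᵥ v)) :
    ∀ᵐ ξ : Rn n, ∀ j : ℕ, G (B ^ j *ᵥ ξ) (B ^ j *ᵥ (ξ + v)) -
      G (B ^ (j + 1) *ᵥ ξ) (B ^ (j + 1) *ᵥ (ξ + v)) =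
        H (B ^ (j + 1) *ᵥ ξ) (B ^ (j + 1) *ᵥ (ξ + v)) := by
  rw [ae_all_iff]
  intro j
  have hBj : (B ^ (j + 1)).det ≠ 0 := by rw [det_pow]; exact pow_ne_zero _ hB
  have hinv : ∀ x, B⁻¹ *ᵥ (B ^ (j + 1) *ᵥ x) = B ^ j *ᵥ x := fun x => by
    rw [mulVec_mulVec, pow_succ', ← mul_assoc, nonsing_inv_mul B hB.isUnit, one_mul]
  filter_upwards [(quasiMeasurePreserving_mulVec hBj).ae (h j)] with ξ hξ
  rwa [← mulVec_add, hinv, hinv] at hξ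

theorem telescoping_series_identity_general
    {n : ℕ} (A : Matrix (Fin n) (Fin n) ℤ) (hA : IsDilationMatrix A)
    (hatφ : ℕ → Rn n → ℂ)
    (p : ℕ) (hatψ : Fin p → Rn n → ℂ)
    (h0 : ∀ᵐ ξ : Rn n, Summable fun i => ‖hatφ i ξ‖ ^ 2)
    (h2 : ∀ s : Zn n, (∃ t : Zn n, A.transpose.mulVec t = s) →
      ∀ᵐ ξ : Rn n,
        (∑' i, hatφ i (((matR A).transpose⁻¹).mulVec ξ) *
            conj (hatφ i (((matR A).transpose⁻¹).mulVec (ξ + twoPi s)))) -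
          (∑' i, hatφ i ξ * conj (hatφ i (ξ + twoPi s))) =
          ∑ i : Fin p, hatψ i ξ * conj (hatψ i (ξ + twoPi s)))
    (h3 : ∀ᵐ ξ : Rn n, Tendsto
      (fun J : ℕ => ∑' i, ‖hatφ i (((matR A).transpose ^ J).mulVec ξ)‖ ^ 2) atTop (nhds 0)) :
    ∀ s : Zn n, ∀ᵐ ξ : Rn n,
      Tendsto (fun J : ℕ => ∑ j ∈ Finset.range J, ∑ i : Fin p,
          hatψ i (((matR A).transpose ^ (j + 1)).mulVec ξ) *
            conj (hatψ i (((matR A).transpose ^ (j + 1)).mulVec (ξ + twoPi s))))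
        atTop (nhds (∑' i, hatφ i ξ * conj (hatφ i (ξ + twoPi s)))) := by
  intro s
  have hB : ((matR A)ᵀ).det ≠ 0 := by rw [det_transpose]; exact hA.1
  have hsq : ∀ᵐ ξ : Rn n, ∀ k : ℕ, Summable fun i => ‖hatφ i ((matR A)ᵀ ^ k *ᵥ ξ)‖ ^ 2 :=
    ae_all_iff.2 fun k =>
      (quasiMeasurePreserving_mulVec (by rw [det_pow]; exact pow_ne_zero k hB)).ae h0
  have hshift : Measure.QuasiMeasurePreserving (· + twoPi s) (volume : Measure (Rn n)) volume :=
    (measurePreserving_add_right volume (twoPi s)).quasiMeasurePreserving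
  have hstep := ae_forall_pow_sub_pow_succ hB (twoPi s)
    (G := fun ξ η => ∑' i, hatφ i ξ * conj (hatφ i η))
    (H := fun ξ η => ∑ i, hatψ i ξ * conj (hatψ i η)) fun j => by
      have hlattice : twoPi (Aᵀ ^ (j + 1) *ᵥ s) = (matR A)ᵀ ^ (j + 1) *ᵥ twoPi s := by
        rw [twoPi_mulVec, matR_pow, matR_transpose]
      have h2j := h2 _ ⟨Aᵀ ^ j *ᵥ s, by rw [mulVec_mulVec, ← pow_succ']⟩
      rwa [hlattice] at h2j
  filter_upwards [hstep, hsq, hshift.ae hsq, h3, hshift.ae h3] with ξ hstep hξ hη h3ξ h3η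
  simpa using tendsto_sum_range_of_sub_succ (tendsto_tsum_mul_conj_zero hξ hη h3ξ h3η) hstep

/-- **Key identity (eq. 3.14 in the paper).** Under the telescoping equations and the decay
condition, the partial sums `∑_{j=1}^J ∑_ψ ψ̂((A*)^jξ)·conj(ψ̂((A*)^j(ξ+2sπ)))` converge to
`∑_φ φ̂(ξ)·conj(φ̂(ξ+2sπ))` for every `s ∈ ℤⁿ` and a.e. `ξ`. -/
theorem telescoping_series_identity
    {n : ℕ} (hn : 0 < n) (A : Matrix (Fin n) (Fin n) ℤ) (hA : IsDilationMatrix A)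
    (φ hatφ : ℕ → Rn n → ℂ) (hφ : ∀ i, HasFT (φ i) (hatφ i))
    (p : ℕ) (ψ hatψ : Fin p → Rn n → ℂ) (hψ : ∀ i, HasFT (ψ i) (hatψ i))
    (h0 : ∀ᵐ ξ : Rn n, Summable fun i => ‖hatφ i ξ‖ ^ 2)
    (h2 : ∀ s : Zn n, (∃ t : Zn n, A.transpose.mulVec t = s) →
      ∀ᵐ ξ : Rn n,
        (∑' i, hatφ i (((matR A).transpose⁻¹).mulVec ξ) *
            conj (hatφ i (((matR A).transpose⁻¹).mulVec (ξ + twoPi s)))) -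
          (∑' i, hatφ i ξ * conj (hatφ i (ξ + twoPi s))) =
          ∑ i : Fin p, hatψ i ξ * conj (hatψ i (ξ + twoPi s)))
    (h3 : ∀ᵐ ξ : Rn n, Tendsto
      (fun J : ℕ => ∑' i, ‖hatφ i (((matR A).transpose ^ J).mulVec ξ)‖ ^ 2) atTop (nhds 0)) :
    ∀ s : Zn n, ∀ᵐ ξ : Rn n,
      Tendsto (fun J : ℕ => ∑ j ∈ Finset.range J, ∑ i : Fin p,
          hatψ i (((matR A).transpose ^ (j + 1)).mulVec ξ) *
            conj (hatψ i (((matR A).transpose ^ (j + 1)).mulVec (ξ + twoPi s))))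
        atTop (nhds (∑' i, hatφ i ξ * conj (hatφ i (ξ + twoPi s)))) :=
  telescoping_series_identity_general A hA hatφ p hatψ h0 h2 h3
end
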